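/- Let s ∈ ℝ, c > 0, and define A_c(q,p) := (q₁p₂ − q₂p₁)² − 2c·((q₁p₂ − q₂p₁)·p₂ − s·q₁/√(q₁² + q₂²)) for q ∈ ℝ² \ {0}, p ∈ ℝ². Then: (i) for every twice-differentiable curve q : I → ℝ² \ {0} satisfying the Kepler equation q''(t) = −s·q(t)/‖q(t)‖³, the function t ↦ A_c(q(t), q'(t)) is constant; (ii) for every a > c and every nonzero point q on the ellipse {(q₁−c)²/a² + q₂²/(a²−c²) = 1} (whose foci are the origin and (2c,0)), the elastic reflection p' of any p ∈ ℝ² at this ellipse at q (with normal n = ((q₁−c)/a², q₂/(a²−c²))) satisfies A_c(q,p') = A_c(q,p); (iii) for every b with 0 < b < c and every nonzero point q on the hyperbola {(q₁−c)²/b² − q₂²/(c²−b²) = 1} (whose foci are the origin and (2c,0)), the elastic reflection p' of any p at this hyperbola at q (with normal n = ((q₁−c)/b², −q₂/(c²−b²))) satisfies A_c(q,p') = A_c(q,p). Hence A_c is a first integral of the Kepler billiard with any combination of confocal focused ellipses and hyperbolae as reflection wall. -/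

import Mathlib

/-!
Write `L_x(p) = (q - x) × p` for the angular momentum about `x` and `F = (2c, 0)`. Then
`A_c = L_0² − 2c·e₁`, where `e₁ = L_0 p₂ − s q₁/‖q‖` is the first component of the
Laplace–Runge–Lenz vector; `L_0` and `e₁` are conserved by the Kepler flow, hence so is `A_c`.
For fixed `q`, also `A_c(q, p) = L_0(p)·L_F(p) + 2cs q₁/‖q‖`. Decomposing `p` along the normal `n`
and the tangent, the reflection only flips the normal component, so it preserves `L_0·L_F` as soon
as `⟨q, n⟩ (q − F) × n + ⟨q − F, n⟩ q × n = 0`, i.e. as soon as `n` bisects the angle between the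
two focal radii. This is the reflection property of every conic with foci `0` and `F`.
-/

/-- The (Gallavotti–Jauslin) first integral
`A_c(q,p) = (q₁p₂ − q₂p₁)² − 2c((q₁p₂ − q₂p₁)p₂ − s·q₁/√(q₁²+q₂²))` of Kepler billiards. -/
noncomputable def keplerA (s c : ℝ) (q p : ℝ × ℝ) : ℝ :=
  (q.1 * p.2 - q.2 * p.1) ^ 2
    - 2 * c * ((q.1 * p.2 - q.2 * p.1) * p.2 - s * q.1 / Real.sqrt (q.1 ^ 2 + q.2 ^ 2))

theorem Convex.eq_of_forall_hasDerivWithinAt_zero {E : Type*} [NormedAddCommGroup E]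
    [NormedSpace ℝ E] {I : Set ℝ} (hI : Convex ℝ I) {f : ℝ → E}
    (hf : ∀ t ∈ I, HasDerivWithinAt f 0 I t) {t t' : ℝ} (ht : t ∈ I) (ht' : t' ∈ I) :
    f t = f t' := by
  have h := hI.norm_image_sub_le_of_norm_hasDerivWithin_le (C := 0) hf (fun _ _ => by simp) ht' ht
  rw [zero_mul] at h
  exact sub_eq_zero.1 (norm_le_zero_iff.1 h)

section Prod

variable {𝕜 E F : Type*} [NontriviallyNormedField 𝕜] [NormedAddCommGroup E] [NormedSpace 𝕜 E]
  [NormedAddCommGroup F] [NormedSpace 𝕜 F] {f : 𝕜 → E × F} {f' : E × F} {S : Set 𝕜} {t : 𝕜}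

theorem HasDerivWithinAt.fst (h : HasDerivWithinAt f f' S t) :
    HasDerivWithinAt (fun τ => (f τ).1) f'.1 S t :=
  (ContinuousLinearMap.fst 𝕜 E F).hasFDerivAt.comp_hasDerivWithinAt t h

theorem HasDerivWithinAt.snd (h : HasDerivWithinAt f f' S t) :
    HasDerivWithinAt (fun τ => (f τ).2) f'.2 S t :=
  (ContinuousLinearMap.snd 𝕜 E F).hasFDerivAt.comp_hasDerivWithinAt t h

end Prod

theorem Prod.fst_sq_add_snd_sq_pos {x : ℝ × ℝ} (hx : x ≠ 0) : 0 < x.1 ^ 2 + x.2 ^ 2 := by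
  obtain ⟨a, b⟩ := x
  rcases eq_or_ne a 0 with rfl | ha
  · have hb : b ≠ 0 := fun hb => hx (by rw [hb]; rfl)
    positivity
  · positivity

def angMom (x p : ℝ × ℝ) : ℝ := x.1 * p.2 - x.2 * p.1

noncomputable def rungeLenzFst (s : ℝ) (q p : ℝ × ℝ) : ℝ :=
  angMom q p * p.2 - s * q.1 / √(q.1 ^ 2 + q.2 ^ 2)

theorem keplerA_eq_angMom_sq_sub (s c : ℝ) (q p : ℝ × ℝ) :
    keplerA s c q p = angMom q p ^ 2 - 2 * c * rungeLenzFst s q p := rfl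

theorem keplerA_eq_angMom_mul_angMom (s c : ℝ) (q p : ℝ × ℝ) :
    keplerA s c q p = angMom q p * angMom (q - (2 * c, 0)) p
      + 2 * c * (s * q.1 / √(q.1 ^ 2 + q.2 ^ 2)) := by
  simp only [keplerA, angMom, Prod.fst_sub, Prod.snd_sub]
  ring

section KeplerFlow

variable {S : Set ℝ} {q v : ℝ → ℝ × ℝ} {t : ℝ}

theorem hasDerivWithinAt_angMom_of_central {k : ℝ} (hq : HasDerivWithinAt q (v t) S t)
    (hv : HasDerivWithinAt v (k • q t) S t) :
    HasDerivWithinAt (fun τ => angMom (q τ) (v τ)) 0 S t := by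
  refine ((hq.fst.mul hv.snd).sub (hq.snd.mul hv.fst)).congr_deriv ?_
  simp only [Prod.smul_fst, Prod.smul_snd, smul_eq_mul]
  ring

theorem hasDerivWithinAt_rungeLenzFst {s : ℝ} (hq0 : q t ≠ 0) (hq : HasDerivWithinAt q (v t) S t)
    (hv : HasDerivWithinAt v ((-(s / √((q t).1 ^ 2 + (q t).2 ^ 2) ^ 3)) • q t) S t) :
    HasDerivWithinAt (fun τ => rungeLenzFst s (q τ) (v τ)) 0 S t := by
  have hpos := Prod.fst_sq_add_snd_sq_pos hq0
  have hr : √((q t).1 ^ 2 + (q t).2 ^ 2) ≠ 0 := (Real.sqrt_pos.2 hpos).ne'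
  have hr2 := Real.sq_sqrt hpos.le
  have hnorm := ((hq.fst.pow 2).add (hq.snd.pow 2)).sqrt hpos.ne'
  refine (((hasDerivWithinAt_angMom_of_central hq hv).mul hv.snd).sub
    ((hq.fst.const_mul s).div hnorm hr)).congr_deriv ?_
  simp only [Prod.smul_snd, smul_eq_mul, angMom, Pi.add_apply, Pi.pow_apply]
  field_simp
  linear_combination (-2 * s * (v t).1) * hr2

theorem hasDerivWithinAt_keplerA_of_kepler {s c : ℝ} (hq0 : q t ≠ 0)
    (hq : HasDerivWithinAt q (v t) S t)
    (hv : HasDerivWithinAt v ((-(s / √((q t).1 ^ 2 + (q t).2 ^ 2) ^ 3)) • q t) S t) :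
    HasDerivWithinAt (fun τ => keplerA s c (q τ) (v τ)) 0 S t :=
  (((hasDerivWithinAt_angMom_of_central hq hv).pow 2).sub
    ((hasDerivWithinAt_rungeLenzFst hq0 hq hv).const_mul (2 * c))).congr_deriv (by simp)

end KeplerFlow

noncomputable def reflect (n p : ℝ × ℝ) : ℝ × ℝ :=
  p - (2 * ((p.1 * n.1 + p.2 * n.2) / (n.1 ^ 2 + n.2 ^ 2))) • n

theorem angMom_mul_angMom_reflect {x y n : ℝ × ℝ} (hn : n ≠ 0)
    (hxy : (x.1 * n.1 + x.2 * n.2) * angMom y n + (y.1 * n.1 + y.2 * n.2) * angMom x n = 0)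
    (p : ℝ × ℝ) :
    angMom x (reflect n p) * angMom y (reflect n p) = angMom x p * angMom y p := by
  obtain ⟨n₁, n₂⟩ := n
  have hN : n₁ ^ 2 + n₂ ^ 2 ≠ 0 := (Prod.fst_sq_add_snd_sq_pos hn).ne'
  simp only [reflect, angMom, Prod.fst_sub, Prod.snd_sub, Prod.smul_fst, Prod.smul_snd,
    smul_eq_mul] at hxy ⊢
  field_simp
  linear_combination (-2 * (p.1 * n₁ + p.2 * n₂) * (p.2 * n₁ - p.1 * n₂)) * hxy

theorem keplerA_reflect_confocal {s c A B : ℝ} (hA : A ≠ 0) (hB : B ≠ 0) (hAB : A - B = c ^ 2)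
    {q : ℝ × ℝ} (hq : (q.1 - c) ^ 2 / A + q.2 ^ 2 / B = 1) (p : ℝ × ℝ) :
    keplerA s c q (reflect ((q.1 - c) / A, q.2 / B) p) = keplerA s c q p := by
  rw [keplerA_eq_angMom_mul_angMom, keplerA_eq_angMom_mul_angMom, angMom_mul_angMom_reflect]
  · rintro h
    simp only [Prod.ext_iff, Prod.fst_zero, Prod.snd_zero, div_eq_zero_iff, hA, hB, or_false] at h
    simp [h.1, h.2] at hq
  · simp only [angMom, Prod.fst_sub, Prod.snd_sub]
    field_simp
    field_simp at hq
    linear_combination (A * q.2 * (q.1 - 2 * c) - (q.1 - c) * B * q.2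
      + q.2 * (q.1 * A - (q.1 - c) * B)) * hq + 2 * A * B * q.2 * (q.1 - c) * hAB

/-- `A_c` is a first integral of the Kepler billiard with any combination of confocal
focused ellipses `(q₁−c)²/a² + q₂²/(a²−c²) = 1` (a > c) and focused hyperbolae
`(q₁−c)²/b² − q₂²/(c²−b²) = 1` (0 < b < c), all with foci the origin and `(2c, 0)`:
it is constant along solutions of `q'' = −s·q/‖q‖³` and invariant under elastic
reflections at these conics. -/
theorem stmt_8 (s c : ℝ) (hc : 0 < c) :
    (∀ I : Set ℝ, Convex ℝ I → ∀ q v : ℝ → ℝ × ℝ,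
      (∀ t ∈ I, q t ≠ 0) →
      (∀ t ∈ I, HasDerivWithinAt q (v t) I t) →
      (∀ t ∈ I, HasDerivWithinAt v
        ((-(s / Real.sqrt ((q t).1 ^ 2 + (q t).2 ^ 2) ^ 3)) • q t) I t) →
      ∀ t ∈ I, ∀ t' ∈ I, keplerA s c (q t) (v t) = keplerA s c (q t') (v t')) ∧
    (∀ a : ℝ, c < a → ∀ q p : ℝ × ℝ, q ≠ 0 →
      (q.1 - c) ^ 2 / a ^ 2 + q.2 ^ 2 / (a ^ 2 - c ^ 2) = 1 →
      ∀ n p' : ℝ × ℝ, n = ((q.1 - c) / a ^ 2, q.2 / (a ^ 2 - c ^ 2)) →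
      p' = p - (2 * ((p.1 * n.1 + p.2 * n.2) / (n.1 ^ 2 + n.2 ^ 2))) • n →
      keplerA s c q p' = keplerA s c q p) ∧
    (∀ b : ℝ, 0 < b → b < c → ∀ q p : ℝ × ℝ, q ≠ 0 →
      (q.1 - c) ^ 2 / b ^ 2 - q.2 ^ 2 / (c ^ 2 - b ^ 2) = 1 →
      ∀ n p' : ℝ × ℝ, n = ((q.1 - c) / b ^ 2, -q.2 / (c ^ 2 - b ^ 2)) →
      p' = p - (2 * ((p.1 * n.1 + p.2 * n.2) / (n.1 ^ 2 + n.2 ^ 2))) • n →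
      keplerA s c q p' = keplerA s c q p) := by
  refine ⟨?_, ?_, ?_⟩
  · intro I hI q v hq0 hq hv t ht t' ht'
    exact hI.eq_of_forall_hasDerivWithinAt_zero
      (fun τ hτ => hasDerivWithinAt_keplerA_of_kepler (hq0 τ hτ) (hq τ hτ) (hv τ hτ)) ht ht'
  · rintro a hca q p - hq n p' rfl rfl
    have ha : 0 < a := hc.trans hca
    have hac : a ^ 2 - c ^ 2 ≠ 0 := (sub_pos.2 (pow_lt_pow_left₀ hca hc.le two_ne_zero)).ne'
    exact keplerA_reflect_confocal (pow_pos ha 2).ne' hac (by ring) hq p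
  · rintro b hb hbc q p - hq n p' rfl rfl
    have hbc' : b ^ 2 - c ^ 2 ≠ 0 := (sub_neg.2 (pow_lt_pow_left₀ hbc hb.le two_ne_zero)).ne
    have hconic : (q.1 - c) ^ 2 / b ^ 2 + q.2 ^ 2 / (b ^ 2 - c ^ 2) = 1 := by
      rwa [← neg_sub (c ^ 2), div_neg, ← sub_eq_add_neg]
    have hn : ((q.1 - c) / b ^ 2, -q.2 / (c ^ 2 - b ^ 2))
        = ((q.1 - c) / b ^ 2, q.2 / (b ^ 2 - c ^ 2)) := by
      rw [neg_div, ← div_neg, neg_sub]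
    rw [hn]
    exact keplerA_reflect_confocal (pow_pos hb 2).ne' hbc' (by ring) hconic p
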